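/- arXiv:1606.04620 — 2 statements merged into one kernel-verified Lean document; each statement's English description precedes it below -/
import Mathlib

section
/- Let Ω ⊆ ℝⁿ (n ≥ 2) be a nonempty, open, bounded set and let G ⊆ Ω be Lebesgue-measurable with P_Ω(G) < ∞. Let ξ_k ↘ 0 and let φ_k : Ω → ℝ (k = 1, 2, …) be continuously differentiable with x ↦ |∇φ_k(x)|² and x ↦ W(φ_k(x)) Lebesgue integrable on Ω. Assume φ_k → χ_G almost everywhere in Ω and ∫_Ω [(ξ_k/2)|∇φ_k|² + W(φ_k)/ξ_k] dx → P_Ω(G) as k → ∞. Then ∫_Ω ( √(ξ_k/2) |∇φ_k| − √(W(φ_k)/ξ_k) )² dx → 0 as k → ∞. -/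
/-!
Modica–Mortola calibration. Let `Φ` be the primitive of `√(2W)` on `[0, 1]`, extended by constants,
so `0 ≤ Φ ≤ 1`, `Φ 0 = 0`, `Φ 1 = 1`. Expanding the square, the integrand equals the energy
density minus `√(2W(φ)) |∇φ|`, and `|∇(Φ ∘ φ)| ≤ √(2W(φ)) |∇φ|` by the chain rule. For an admissible
test field `g`, integration by parts and dominated convergence give
`∫_G div g = lim ∫ Φ(φ_k) div g ≤ liminf ∫ √(2W(φ_k)) |∇φ_k|`; taking the supremum over `g`, this
liminf is at least `P_Ω(G)`, the limit of the energies, so the integrals of the squares tend to `0`.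
-/

open MeasureTheory Filter Topology RealInnerProductSpace

/-- The quartic double-well potential `W(s) = 18 s² (1-s)²`. -/
noncomputable def W (s : ℝ) : ℝ := 18 * s ^ 2 * (1 - s) ^ 2

/-- Divergence of a vector field on `ℝⁿ`. -/
noncomputable def vdiv {n : ℕ} (g : EuclideanSpace ℝ (Fin n) → EuclideanSpace ℝ (Fin n))
    (x : EuclideanSpace ℝ (Fin n)) : ℝ :=
  ∑ i, fderiv ℝ g x (EuclideanSpace.single i 1) i

/-- The set of numbers `∫_G div g` over admissible test vector fields `g` (C¹, compactly
supported in `Ω`, with `|g| ≤ 1`), whose supremum is the perimeter of `G` in `Ω`. -/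
noncomputable def perimSet {n : ℕ} (Ω G : Set (EuclideanSpace ℝ (Fin n))) : Set ℝ :=
  { r | ∃ g : EuclideanSpace ℝ (Fin n) → EuclideanSpace ℝ (Fin n),
      ContDiff ℝ 1 g ∧ HasCompactSupport g ∧ tsupport g ⊆ Ω ∧
      (∀ x, ‖g x‖ ≤ 1) ∧ r = ∫ x in G, vdiv g x }

/-- The perimeter `P_Ω(G)` of `G` in `Ω`. -/
noncomputable def perim {n : ℕ} (Ω G : Set (EuclideanSpace ℝ (Fin n))) : ℝ :=
  sSup (perimSet Ω G)

lemma W_nonneg (s : ℝ) : 0 ≤ W s := by unfold W; positivity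

lemma continuous_W : Continuous W := by unfold W; fun_prop

/-- `√(2W)` on `[0, 1]`, truncated to `0` outside, so that its primitive `Phi` takes values in
`[0, 1]` and fixes the two wells `0` and `1`. -/
noncomputable def rootW (s : ℝ) : ℝ := max 0 (6 * s * (1 - s))

lemma continuous_rootW : Continuous rootW := by
  unfold rootW; fun_prop

lemma rootW_nonneg (s : ℝ) : 0 ≤ rootW s := le_max_left _ _

lemma rootW_le_sqrt_two_mul_W (s : ℝ) : rootW s ≤ √(2 * W s) := by
  rw [show 2 * W s = (6 * s * (1 - s)) ^ 2 by unfold W; ring, Real.sqrt_sq_eq_abs]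
  exact max_le (abs_nonneg _) (le_abs_self _)

lemma rootW_eq_zero {s : ℝ} (hs : s ≤ 0 ∨ 1 ≤ s) : rootW s = 0 :=
  max_eq_left (by rcases hs with hs | hs <;> nlinarith)

noncomputable def Phi (s : ℝ) : ℝ := ∫ t in (0 : ℝ)..s, rootW t

lemma hasDerivAt_Phi (s : ℝ) : HasDerivAt Phi (rootW s) s :=
  intervalIntegral.integral_hasDerivAt_right (continuous_rootW.intervalIntegrable _ _)
    continuous_rootW.stronglyMeasurable.stronglyMeasurableAtFilter continuous_rootW.continuousAt

lemma contDiff_Phi : ContDiff ℝ 1 Phi := by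
  rw [contDiff_one_iff_deriv, funext fun s => (hasDerivAt_Phi s).deriv]
  exact ⟨fun s => (hasDerivAt_Phi s).differentiableAt, continuous_rootW⟩

lemma monotone_Phi : Monotone Phi :=
  monotone_of_hasDerivAt_nonneg hasDerivAt_Phi rootW_nonneg

lemma Phi_of_nonpos {s : ℝ} (hs : s ≤ 0) : Phi s = 0 := by
  rw [Phi, intervalIntegral.integral_congr (g := fun _ => 0) fun t ht => rootW_eq_zero <|
    Or.inl ((Set.uIcc_of_ge hs ▸ ht).2)]
  simp

lemma Phi_one : Phi 1 = 1 := by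
  have h : Set.EqOn rootW (fun t => 6 * t - 6 * t ^ 2) (Set.uIcc 0 1) := fun t ht => by
    rw [Set.uIcc_of_le zero_le_one] at ht
    rw [rootW, max_eq_right (by nlinarith [ht.1, ht.2])]; ring
  rw [Phi, intervalIntegral.integral_congr h, intervalIntegral.integral_sub
    (by apply Continuous.intervalIntegrable; fun_prop)
    (by apply Continuous.intervalIntegrable; fun_prop), intervalIntegral.integral_const_mul,
    intervalIntegral.integral_const_mul, integral_id, integral_pow]
  norm_num

lemma Phi_of_one_le {s : ℝ} (hs : 1 ≤ s) : Phi s = 1 := by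
  have h : ∫ t in (1 : ℝ)..s, rootW t = 0 := by
    rw [intervalIntegral.integral_congr (g := fun _ => 0) fun t ht => rootW_eq_zero <|
      Or.inr ((Set.uIcc_of_le hs ▸ ht).1)]
    simp
  rw [← Phi_one, ← sub_eq_zero, Phi, Phi, intervalIntegral.integral_interval_sub_left
    (continuous_rootW.intervalIntegrable _ _) (continuous_rootW.intervalIntegrable _ _), h]

lemma abs_Phi_le_one (s : ℝ) : |Phi s| ≤ 1 := by
  have h0 : 0 ≤ Phi s := Phi_of_nonpos (min_le_right s 0) ▸ monotone_Phi (min_le_left s 0)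
  have h1 : Phi s ≤ 1 := Phi_of_one_le (le_max_right s 1) ▸ monotone_Phi (le_max_left s 1)
  exact abs_le.2 ⟨by linarith, h1⟩

lemma Phi_indicator_one_mul {α : Type*} (G : Set α) (f : α → ℝ) (x : α) :
    Phi (G.indicator (fun _ => 1) x) * f x = G.indicator f x := by
  by_cases hx : x ∈ G <;> simp [hx, Phi_one, Phi_of_nonpos]

lemma sq_sqrt_mul_sub_sqrt_div {ξ w : ℝ} (hξ : 0 < ξ) (hw : 0 ≤ w) (t : ℝ) :
    (√(ξ / 2) * t - √(w / ξ)) ^ 2 = ξ / 2 * t ^ 2 + w / ξ - √(2 * w) * t := by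
  have hprod : √(ξ / 2) * √(w / ξ) = √(2 * w) / 2 := by
    rw [← Real.sqrt_mul (by positivity), show ξ / 2 * (w / ξ) = 2 * w / 2 ^ 2 by field_simp,
      Real.sqrt_div' _ (by positivity), Real.sqrt_sq zero_le_two]
  calc (√(ξ / 2) * t - √(w / ξ)) ^ 2
      = √(ξ / 2) ^ 2 * t ^ 2 - 2 * (√(ξ / 2) * √(w / ξ)) * t + √(w / ξ) ^ 2 := by ring
    _ = ξ / 2 * t ^ 2 + w / ξ - √(2 * w) * t := by
      rw [hprod, Real.sq_sqrt (by positivity), Real.sq_sqrt (by positivity)]; ring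

theorem ContinuousOn.integrable_mul_of_tsupport_subset {X : Type*} [TopologicalSpace X]
    [T2Space X] [MeasurableSpace X] [OpensMeasurableSpace X] {μ : Measure X}
    [IsFiniteMeasureOnCompacts μ] {f h : X → ℝ} {s : Set X} (hf : ContinuousOn f s)
    (hh : Continuous h) (hhc : HasCompactSupport h) (hhs : tsupport h ⊆ s) :
    Integrable (fun x => f x * h x) μ :=
  (((hf.mono hhs).mul hh.continuousOn).integrableOn_compact hhc).integrable_of_forall_notMem_eq_zero
    fun x hx => by rw [Pi.mul_apply, image_eq_zero_of_notMem_tsupport hx, mul_zero]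

theorem integral_mul_fderiv_eq_neg_of_tsupport_subset {E : Type*} [NormedAddCommGroup E]
    [NormedSpace ℝ E] [FiniteDimensional ℝ E] [MeasurableSpace E] [BorelSpace E]
    {μ : Measure E} [μ.IsAddHaarMeasure] {Ω : Set E} {u h : E → ℝ} (hΩ : IsOpen Ω)
    (hu : ContDiffOn ℝ 1 u Ω) (hh : ContDiff ℝ 1 h) (hhc : HasCompactSupport h)
    (hhΩ : tsupport h ⊆ Ω) (v : E) :
    ∫ x, u x * fderiv ℝ h x v ∂μ = -∫ x, fderiv ℝ u x v * h x ∂μ :=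
  integral_mul_fderiv_eq_neg_fderiv_mul_of_integrable
    (((hu.continuousOn_fderiv_of_isOpen hΩ le_rfl).clm_apply continuousOn_const)
      |>.integrable_mul_of_tsupport_subset hh.continuous hhc hhΩ)
    (hu.continuousOn.integrable_mul_of_tsupport_subset
      ((hh.continuous_fderiv one_ne_zero).clm_apply continuous_const) (hhc.fderiv_apply ℝ v)
      ((tsupport_fderiv_apply_subset ℝ v).trans hhΩ))
    (hu.continuousOn.integrable_mul_of_tsupport_subset hh.continuous hhc hhΩ)
    (fun _ hx => (hu.contDiffAt (hΩ.mem_nhds (hhΩ hx))).differentiableAt one_ne_zero)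
    (fun x _ => hh.differentiable one_ne_zero x)

section Divergence

variable {n : ℕ} {g : EuclideanSpace ℝ (Fin n) → EuclideanSpace ℝ (Fin n)}

lemma vdiv_eq_zero_of_notMem_tsupport {x : EuclideanSpace ℝ (Fin n)} (hx : x ∉ tsupport g) :
    vdiv g x = 0 := by
  simp [vdiv, fderiv_of_notMem_tsupport ℝ hx]

lemma integrable_vdiv (hg : ContDiff ℝ 1 g) (hgc : HasCompactSupport g) : Integrable (vdiv g) := by
  have := hg.continuous_fderiv one_ne_zero
  exact Continuous.integrable_of_hasCompactSupport (by unfold vdiv; fun_prop)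
    (HasCompactSupport.intro hgc fun _ hx => vdiv_eq_zero_of_notMem_tsupport hx)

lemma vdiv_eq_sum_fderiv_coord (hg : Differentiable ℝ g) (x : EuclideanSpace ℝ (Fin n)) :
    vdiv g x = ∑ i, fderiv ℝ (fun y => g y i) x (EuclideanSpace.single i 1) := by
  refine Finset.sum_congr rfl fun i _ => ?_
  have h : HasFDerivAt (fun y => g y i) ((EuclideanSpace.proj i).comp (fderiv ℝ g x)) x :=
    (EuclideanSpace.proj (𝕜 := ℝ) i).hasFDerivAt.comp x (hg x).hasFDerivAt
  rw [h.fderiv]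
  rfl

lemma EuclideanSpace.map_eq_sum_map_single_mul (L : EuclideanSpace ℝ (Fin n) →L[ℝ] ℝ)
    (v : EuclideanSpace ℝ (Fin n)) : L v = ∑ i, L (EuclideanSpace.single i 1) * v i := by
  conv_lhs => rw [← (EuclideanSpace.basisFun (Fin n) ℝ).sum_repr v]
  simp [mul_comm]

lemma integral_mul_vdiv_eq_neg {Ω : Set (EuclideanSpace ℝ (Fin n))}
    {u : EuclideanSpace ℝ (Fin n) → ℝ} (hΩ : IsOpen Ω) (hu : ContDiffOn ℝ 1 u Ω)
    (hg : ContDiff ℝ 1 g) (hgc : HasCompactSupport g) (hgΩ : tsupport g ⊆ Ω) :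
    ∫ x in Ω, u x * vdiv g x = -∫ x in Ω, fderiv ℝ u x (g x) := by
  have hgi (i : Fin n) : ContDiff ℝ 1 (fun y => g y i) :=
    (EuclideanSpace.proj (𝕜 := ℝ) i).contDiff.comp hg
  have hgic (i : Fin n) : HasCompactSupport (fun y => g y i) :=
    hgc.comp_left (g := EuclideanSpace.proj (𝕜 := ℝ) i) (map_zero _)
  have hgiΩ (i : Fin n) : tsupport (fun y => g y i) ⊆ Ω :=
    (tsupport_comp_subset (map_zero (EuclideanSpace.proj (𝕜 := ℝ) i)) g).trans hgΩ
  have hzero {x} (hx : x ∉ Ω) : g x = 0 := image_eq_zero_of_notMem_tsupport fun h => hx (hgΩ h)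
  rw [setIntegral_eq_integral_of_forall_compl_eq_zero fun x hx => by
      rw [vdiv_eq_zero_of_notMem_tsupport fun h => hx (hgΩ h), mul_zero],
    setIntegral_eq_integral_of_forall_compl_eq_zero fun x hx => by rw [hzero hx, map_zero]]
  simp_rw [vdiv_eq_sum_fderiv_coord (hg.differentiable one_ne_zero), Finset.mul_sum,
    EuclideanSpace.map_eq_sum_map_single_mul (fderiv ℝ u _) (g _)]
  rw [integral_finsetSum _ fun i _ => hu.continuousOn.integrable_mul_of_tsupport_subset
      (((hgi i).continuous_fderiv one_ne_zero).clm_apply continuous_const)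
      ((hgic i).fderiv_apply ℝ _) ((tsupport_fderiv_apply_subset ℝ _).trans (hgiΩ i)),
    integral_finsetSum _ fun i _ => ((hu.continuousOn_fderiv_of_isOpen hΩ le_rfl).clm_apply
      continuousOn_const).integrable_mul_of_tsupport_subset (hgi i).continuous (hgic i) (hgiΩ i),
    ← Finset.sum_neg_distrib]
  exact Finset.sum_congr rfl fun i _ =>
    integral_mul_fderiv_eq_neg_of_tsupport_subset hΩ hu (hgi i) (hgic i) (hgiΩ i) _

end Divergence

lemma tendsto_setIntegral_Phi_comp_mul {α : Type*} [MeasurableSpace α] {μ : Measure α}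
    {Ω G : Set α} {u : ℕ → α → ℝ} {f : α → ℝ} (hG : MeasurableSet G) (hGΩ : G ⊆ Ω)
    (hu : ∀ k, AEStronglyMeasurable (u k) (μ.restrict Ω)) (hf : IntegrableOn f Ω μ)
    (hlim : ∀ᵐ x ∂μ.restrict Ω, Tendsto (u · x) atTop (𝓝 (G.indicator (fun _ => 1) x))) :
    Tendsto (fun k => ∫ x in Ω, Phi (u k x) * f x ∂μ) atTop (𝓝 (∫ x in G, f x ∂μ)) := by
  have hG_eq : ∫ x in G, f x ∂μ = ∫ x in Ω, Phi (G.indicator (fun _ => 1) x) * f x ∂μ := by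
    simp_rw [Phi_indicator_one_mul]
    rw [setIntegral_indicator hG, Set.inter_eq_self_of_subset_right hGΩ]
  rw [hG_eq]
  refine tendsto_integral_of_dominated_convergence (fun x => ‖f x‖)
    (fun k => (contDiff_Phi.continuous.comp_aestronglyMeasurable (hu k)).mul hf.1) hf.norm
    (fun k => Eventually.of_forall fun x => ?_) ?_
  · rw [norm_mul]
    exact mul_le_of_le_one_left (norm_nonneg _) (abs_Phi_le_one _)
  · filter_upwards [hlim] with x hx
    exact ((contDiff_Phi.continuous.tendsto _).comp hx).mul_const _

section Calibration

variable {n : ℕ} {Ω : Set (EuclideanSpace ℝ (Fin n))} {ψ : EuclideanSpace ℝ (Fin n) → ℝ}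

lemma integrableOn_sqrt_two_mul_W_mul_norm_gradient (hΩ : IsOpen Ω) (hψ : ContDiffOn ℝ 1 ψ Ω)
    (hgrad : IntegrableOn (fun x => ‖gradient ψ x‖ ^ 2) Ω)
    (hW : IntegrableOn (fun x => W (ψ x)) Ω) :
    IntegrableOn (fun x => √(2 * W (ψ x)) * ‖gradient ψ x‖) Ω := by
  have hcont : ContinuousOn (fun x => √(2 * W (ψ x)) * ‖gradient ψ x‖) Ω := by
    simp_rw [gradient, LinearIsometryEquiv.norm_map]
    exact ((continuous_const.mul continuous_W).sqrt.comp_continuousOn hψ.continuousOn).mul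
      (hψ.continuousOn_fderiv_of_isOpen hΩ le_rfl).norm
  refine (hgrad.add hW).mono' (hcont.aestronglyMeasurable hΩ.measurableSet)
    (Eventually.of_forall fun x => ?_)
  have h2W : 0 ≤ 2 * W (ψ x) := by linarith [W_nonneg (ψ x)]
  rw [Real.norm_of_nonneg (by positivity), Pi.add_apply]
  nlinarith [sq_nonneg (√(2 * W (ψ x)) - ‖gradient ψ x‖), Real.sq_sqrt h2W]

lemma setIntegral_sq_sub_eq {ξ : ℝ} (hξ : 0 < ξ) (hΩ : IsOpen Ω) (hψ : ContDiffOn ℝ 1 ψ Ω)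
    (hgrad : IntegrableOn (fun x => ‖gradient ψ x‖ ^ 2) Ω)
    (hW : IntegrableOn (fun x => W (ψ x)) Ω) :
    ∫ x in Ω, (√(ξ / 2) * ‖gradient ψ x‖ - √(W (ψ x) / ξ)) ^ 2 =
      (∫ x in Ω, (ξ / 2 * ‖gradient ψ x‖ ^ 2 + W (ψ x) / ξ)) -
        ∫ x in Ω, √(2 * W (ψ x)) * ‖gradient ψ x‖ := by
  have hE : IntegrableOn (fun x => ξ / 2 * ‖gradient ψ x‖ ^ 2 + W (ψ x) / ξ) Ω :=
    (hgrad.const_mul _).add (hW.div_const _)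
  rw [← integral_sub hE (integrableOn_sqrt_two_mul_W_mul_norm_gradient hΩ hψ hgrad hW)]
  exact integral_congr_ae (Eventually.of_forall fun x =>
    sq_sqrt_mul_sub_sqrt_div hξ (W_nonneg _) _)

lemma setIntegral_Phi_comp_mul_vdiv_le (hΩ : IsOpen Ω) (hψ : ContDiffOn ℝ 1 ψ Ω)
    {g : EuclideanSpace ℝ (Fin n) → EuclideanSpace ℝ (Fin n)} (hg : ContDiff ℝ 1 g)
    (hgc : HasCompactSupport g) (hgΩ : tsupport g ⊆ Ω) (hg1 : ∀ x, ‖g x‖ ≤ 1)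
    (hD : IntegrableOn (fun x => √(2 * W (ψ x)) * ‖gradient ψ x‖) Ω) :
    ∫ x in Ω, Phi (ψ x) * vdiv g x ≤ ∫ x in Ω, √(2 * W (ψ x)) * ‖gradient ψ x‖ := by
  rw [integral_mul_vdiv_eq_neg (u := fun x => Phi (ψ x)) hΩ (contDiff_Phi.comp_contDiffOn hψ)
    hg hgc hgΩ]
  refine (neg_le_abs _).trans <| (Real.norm_eq_abs _).symm.trans_le <|
    norm_integral_le_of_norm_le hD (ae_restrict_of_forall_mem hΩ.measurableSet fun x hx => ?_)
  have hψx : HasFDerivAt ψ (fderiv ℝ ψ x) x :=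
    ((hψ.contDiffAt (hΩ.mem_nhds hx)).differentiableAt one_ne_zero).hasFDerivAt
  have hΦψ : HasFDerivAt (fun y => Phi (ψ y)) (rootW (ψ x) • fderiv ℝ ψ x) x :=
    (hasDerivAt_Phi (ψ x)).comp_hasFDerivAt x hψx
  rw [hΦψ.fderiv, _root_.smul_apply, norm_smul, gradient, LinearIsometryEquiv.norm_map, Real.norm_of_nonneg (rootW_nonneg _)]
  gcongr
  · exact rootW_le_sqrt_two_mul_W _
  · exact (fderiv ℝ ψ x).le_of_opNorm_le_of_le le_rfl (hg1 x) |>.trans_eq (mul_one _)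
end Calibration

lemma zero_mem_perimSet {n : ℕ} (Ω G : Set (EuclideanSpace ℝ (Fin n))) : 0 ∈ perimSet Ω G :=
  ⟨0, contDiff_const, HasCompactSupport.zero, by simp, by simp, by simp [vdiv]⟩

lemma tendsto_zero_of_le_sub_of_tendsto_csSup {S : Set ℝ} (hS : S.Nonempty) {a E : ℕ → ℝ}
    (ha : ∀ k, 0 ≤ a k) (hE : Tendsto E atTop (𝓝 (sSup S)))
    (hlow : ∀ r ∈ S, ∃ c : ℕ → ℝ, Tendsto c atTop (𝓝 r) ∧ ∀ k, c k ≤ E k - a k) :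
    Tendsto a atTop (𝓝 0) := by
  refine tendsto_order.2 ⟨fun b hb => Eventually.of_forall fun k => hb.trans_le (ha k),
    fun b hb => ?_⟩
  obtain ⟨r, hr, hrS⟩ := exists_lt_of_lt_csSup hS (sub_lt_self (sSup S) (half_pos hb))
  obtain ⟨c, hc, hcE⟩ := hlow r hr
  filter_upwards [hc.eventually (lt_mem_nhds hrS),
    hE.eventually (gt_mem_nhds (lt_add_of_pos_right (sSup S) (half_pos hb)))] with k hck hEk
  linarith [hcE k]

theorem equipartition_sq_general {n : ℕ}
    (Ω : Set (EuclideanSpace ℝ (Fin n))) (hΩopen : IsOpen Ω)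
    (G : Set (EuclideanSpace ℝ (Fin n))) (hGmeas : MeasurableSet G) (hGΩ : G ⊆ Ω)
    (ξ : ℕ → ℝ) (hξpos : ∀ k, 0 < ξ k)
    (φ : ℕ → EuclideanSpace ℝ (Fin n) → ℝ)
    (hφ : ∀ k, ContDiffOn ℝ 1 (φ k) Ω)
    (hgradInt : ∀ k, IntegrableOn (fun x => ‖gradient (φ k) x‖ ^ 2) Ω)
    (hWInt : ∀ k, IntegrableOn (fun x => W (φ k x)) Ω)
    (hae : ∀ᵐ x ∂(volume.restrict Ω),
      Tendsto (fun k => φ k x) atTop (𝓝 (G.indicator (fun _ => (1 : ℝ)) x)))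
    (henergy : Tendsto
      (fun k => ∫ x in Ω, (ξ k / 2 * ‖gradient (φ k) x‖ ^ 2 + W (φ k x) / ξ k))
      atTop (𝓝 (perim Ω G))) :
    Tendsto (fun k => ∫ x in Ω,
        (Real.sqrt (ξ k / 2) * ‖gradient (φ k) x‖ - Real.sqrt (W (φ k x) / ξ k)) ^ 2)
      atTop (𝓝 0) := by
  refine tendsto_zero_of_le_sub_of_tendsto_csSup ⟨0, zero_mem_perimSet Ω G⟩
    (fun k => integral_nonneg fun x => sq_nonneg _) henergy ?_
  rintro _ ⟨g, hg, hgc, hgΩ, hg1, rfl⟩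
  refine ⟨fun k => ∫ x in Ω, Phi (φ k x) * vdiv g x, ?_, fun k => ?_⟩
  · exact tendsto_setIntegral_Phi_comp_mul hGmeas hGΩ
      (fun k => (hφ k).continuousOn.aestronglyMeasurable hΩopen.measurableSet)
      (integrable_vdiv hg hgc).integrableOn hae
  · rw [setIntegral_sq_sub_eq (hξpos k) hΩopen (hφ k) (hgradInt k) (hWInt k), sub_sub_cancel]
    exact setIntegral_Phi_comp_mul_vdiv_le hΩopen (hφ k) hg hgc hgΩ hg1
      (integrableOn_sqrt_two_mul_W_mul_norm_gradient hΩopen (hφ k) (hgradInt k) (hWInt k))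

theorem equipartition_sq {n : ℕ} (hn : 2 ≤ n)
    (Ω : Set (EuclideanSpace ℝ (Fin n))) (hΩne : Ω.Nonempty) (hΩopen : IsOpen Ω)
    (hΩbdd : Bornology.IsBounded Ω)
    (G : Set (EuclideanSpace ℝ (Fin n))) (hGmeas : MeasurableSet G) (hGΩ : G ⊆ Ω)
    (hPfin : BddAbove (perimSet Ω G))
    (ξ : ℕ → ℝ) (hξpos : ∀ k, 0 < ξ k) (hξanti : StrictAnti ξ)
    (hξ0 : Tendsto ξ atTop (𝓝 0))
    (φ : ℕ → EuclideanSpace ℝ (Fin n) → ℝ)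
    (hφ : ∀ k, ContDiffOn ℝ 1 (φ k) Ω)
    (hgradInt : ∀ k, IntegrableOn (fun x => ‖gradient (φ k) x‖ ^ 2) Ω)
    (hWInt : ∀ k, IntegrableOn (fun x => W (φ k x)) Ω)
    (hae : ∀ᵐ x ∂(volume.restrict Ω),
      Tendsto (fun k => φ k x) atTop (𝓝 (G.indicator (fun _ => (1 : ℝ)) x)))
    (henergy : Tendsto
      (fun k => ∫ x in Ω, (ξ k / 2 * ‖gradient (φ k) x‖ ^ 2 + W (φ k x) / ξ k))
      atTop (𝓝 (perim Ω G))) :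
    Tendsto (fun k => ∫ x in Ω,
        (Real.sqrt (ξ k / 2) * ‖gradient (φ k) x‖ - Real.sqrt (W (φ k x) / ξ k)) ^ 2)
      atTop (𝓝 0) :=
  equipartition_sq_general Ω hΩopen G hGmeas hGΩ ξ hξpos φ hφ hgradInt hWInt hae henergy
end

section
/- Let Ω ⊆ ℝ³ be open, let ε : ℝ → ℝ be continuously differentiable, let B : ℝ → ℝ be continuously differentiable, let ρ : Ω → ℝ be continuous, and let φ, ψ : Ω → ℝ be twice continuously differentiable and satisfy the Poisson–Boltzmann equation div(ε(φ) ∇ψ) − (φ − 1)² B'(ψ) = −ρ everywhere in Ω. Define the electrostatic stress tensor T_ele := ε(φ) ∇ψ ⊗ ∇ψ − [ (ε(φ)/2)|∇ψ|² + (φ − 1)² B(ψ) ] I₃. Then for every x ∈ Ω and i ∈ {1,2,3}, ∑_{j=1}^3 ∂_j (T_ele)_{ij}(x) = −ρ(x) ∂_i ψ(x) − [ (ε'(φ(x))/2)|∇ψ(x)|² + 2(φ(x) − 1) B(ψ(x)) ] ∂_i φ(x); equivalently, the force f_ele := [ −(ε'(φ)/2)|∇ψ|² − 2(φ − 1) B(ψ)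 ] ∇φ satisfies f_ele = div T_ele + ρ ∇ψ on Ω. -/
/-!
By the product rule and the symmetry of the Hessian of `ψ`,
`∑ⱼ ∂ⱼ(ε(φ) ∂ᵢψ ∂ⱼψ) = ∂ᵢψ div(ε(φ)∇ψ) + ε(φ) ∑ⱼ ∂ⱼψ ∂ᵢ∂ⱼψ`, and the second term cancels against
the part of `∂ᵢ(ε(φ)/2 |∇ψ|²)` in which `∇ψ` is differentiated. The Poisson–Boltzmann equation
turns `∂ᵢψ div(ε(φ)∇ψ)` into `-ρ ∂ᵢψ + (φ-1)² B'(ψ) ∂ᵢψ`, and the last term cancels against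
the part of `∂ᵢ((φ-1)² B(ψ))` in which `ψ` is differentiated. What remains is the derivative
of the coefficients through `φ`.
-/

open MeasureTheory Filter Topology

/-- The partial derivative `∂_i f` of a scalar field on `ℝ³`. -/
noncomputable def pd (f : EuclideanSpace ℝ (Fin 3) → ℝ) (i : Fin 3)
    (x : EuclideanSpace ℝ (Fin 3)) : ℝ :=
  fderiv ℝ f x (EuclideanSpace.single i 1)

/-- The electrostatic stress tensor
`T_ele = ε(φ) ∇ψ ⊗ ∇ψ − [ (ε(φ)/2)|∇ψ|² + (φ−1)² B(ψ) ] I₃`, entrywise. -/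
noncomputable def Tele (ε B : ℝ → ℝ) (φ ψ : EuclideanSpace ℝ (Fin 3) → ℝ)
    (i j : Fin 3) (x : EuclideanSpace ℝ (Fin 3)) : ℝ :=
  ε (φ x) * pd ψ i x * pd ψ j x
    - (ε (φ x) / 2 * ∑ l, (pd ψ l x) ^ 2 + (φ x - 1) ^ 2 * B (ψ x))
        * (if i = j then 1 else 0)

local notation "ℝ³" => EuclideanSpace ℝ (Fin 3)

section PartialDerivative

variable {f g : ℝ³ → ℝ} {x : ℝ³} (i : Fin 3)

theorem pd_add (hf : DifferentiableAt ℝ f x) (hg : DifferentiableAt ℝ g x) :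
    pd (fun y => f y + g y) i x = pd f i x + pd g i x := by
  simp only [pd, fderiv_fun_add hf hg, add_apply]

theorem pd_sub (hf : DifferentiableAt ℝ f x) (hg : DifferentiableAt ℝ g x) :
    pd (fun y => f y - g y) i x = pd f i x - pd g i x := by
  simp only [pd, fderiv_fun_sub hf hg, sub_apply]

theorem pd_mul (hf : DifferentiableAt ℝ f x) (hg : DifferentiableAt ℝ g x) :
    pd (fun y => f y * g y) i x = pd f i x * g x + f x * pd g i x := by
  simp only [pd, fderiv_fun_mul hf hg, add_apply, smul_apply, smul_eq_mul]
  ring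

theorem pd_comp {h : ℝ → ℝ} (hh : DifferentiableAt ℝ h (f x)) (hf : DifferentiableAt ℝ f x) :
    pd (fun y => h (f y)) i x = deriv h (f x) * pd f i x := by
  have hcomp : HasFDerivAt (fun y => h (f y)) (deriv h (f x) • fderiv ℝ f x) x :=
    hh.hasDerivAt.comp_hasFDerivAt x hf.hasFDerivAt
  simp only [pd, hcomp.fderiv, smul_apply, smul_eq_mul]

theorem pd_sum_sq {ι : Type*} [Fintype ι] {u : ι → ℝ³ → ℝ}
    (hu : ∀ l, DifferentiableAt ℝ (u l) x) :
    pd (fun y => ∑ l, u l y ^ 2) i x = 2 * ∑ l, u l x * pd (u l) i x := by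
  have hsum := fderiv_fun_sum (u := Finset.univ) (A := fun l y => u l y ^ 2)
    (fun l _ => (hu l).pow 2)
  simp only [pd, hsum, FunLike.coe_sum, Finset.sum_apply, fderiv_fun_pow 2 (hu _), smul_apply,
    smul_eq_mul, Finset.mul_sum]
  refine Finset.sum_congr rfl fun l _ => ?_
  push_cast
  ring

theorem sum_pd_mul_ite (P : ℝ³ → ℝ) :
    ∑ j, pd (fun y => P y * if i = j then 1 else 0) j x = pd P i x := by
  rw [Finset.sum_eq_single i]
  · simp
  · intro j _ hj
    simp [Ne.symm hj, pd]
  · simp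

theorem sum_pd_mul_mul {a : ℝ³ → ℝ} {u : Fin 3 → ℝ³ → ℝ}
    (ha : DifferentiableAt ℝ a x) (hu : ∀ j, DifferentiableAt ℝ (u j) x) :
    ∑ j, pd (fun y => a y * u i y * u j y) j x
      = u i x * ∑ j, pd (fun y => a y * u j y) j x + a x * ∑ j, u j x * pd (u i) j x := by
  rw [Finset.mul_sum, Finset.mul_sum, ← Finset.sum_add_distrib]
  refine Finset.sum_congr rfl fun j _ => ?_
  rw [pd_mul j (ha.fun_mul (hu i)) (hu j), pd_mul j ha (hu i), pd_mul j ha (hu j)]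
  ring

theorem ContDiffAt.differentiableAt_pd (hf : ContDiffAt ℝ 2 f x) :
    DifferentiableAt ℝ (pd f i) x :=
  ((hf.fderiv_right (m := 1) (by norm_num)).differentiableAt one_ne_zero).clm_apply
    (differentiableAt_const _)

theorem ContDiffAt.pd_pd (hf : ContDiffAt ℝ 2 f x) (j : Fin 3) :
    pd (pd f i) j x
      = fderiv ℝ (fderiv ℝ f) x (EuclideanSpace.single j 1) (EuclideanSpace.single i 1) := by
  have hf' := (hf.fderiv_right (m := 1) (by norm_num)).differentiableAt one_ne_zero
  have hpd : pd f i = fun y => fderiv ℝ f y (EuclideanSpace.single i 1) := rfl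
  rw [pd, hpd, fderiv_clm_apply hf' (differentiableAt_const _)]
  simp

theorem ContDiffAt.pd_pd_comm (hf : ContDiffAt ℝ 2 f x) (j : Fin 3) :
    pd (pd f i) j x = pd (pd f j) i x := by
  rw [hf.pd_pd, hf.pd_pd]
  exact hf.isSymmSndFDerivAt (by simp) _ _

end PartialDerivative

section ElectrostaticStress

/-- The coefficient of `-I₃` in `Tele`. -/
noncomputable def electrostaticPressure (ε B : ℝ → ℝ) (φ ψ : ℝ³ → ℝ) (x : ℝ³) : ℝ :=
  ε (φ x) / 2 * ∑ l, pd ψ l x ^ 2 + (φ x - 1) ^ 2 * B (ψ x)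

variable {ε B : ℝ → ℝ} {φ ψ : ℝ³ → ℝ} {x : ℝ³} (i : Fin 3)

theorem pd_electrostaticPressure
    (hε : DifferentiableAt ℝ ε (φ x)) (hB : DifferentiableAt ℝ B (ψ x))
    (hφ : DifferentiableAt ℝ φ x) (hψ : ContDiffAt ℝ 2 ψ x) :
    pd (electrostaticPressure ε B φ ψ) i x
      = (deriv ε (φ x) / 2 * ∑ l, pd ψ l x ^ 2 + 2 * (φ x - 1) * B (ψ x)) * pd φ i x
        + ε (φ x) * ∑ l, pd ψ l x * pd (pd ψ l) i x
        + (φ x - 1) ^ 2 * deriv B (ψ x) * pd ψ i x := by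
  have hdψ (l : Fin 3) := hψ.differentiableAt_pd l
  have hψ1 := hψ.differentiableAt two_ne_zero
  have hεφ : pd (fun y => ε (φ y) / 2) i x = deriv ε (φ x) / 2 * pd φ i x := by
    rw [pd_comp i (h := fun t => ε t / 2) (hε.div_const 2) hφ, deriv_div_const]
  have hsq : pd (fun y => (φ y - 1) ^ 2) i x = 2 * (φ x - 1) * pd φ i x := by
    rw [pd_comp i (h := fun t => (t - 1) ^ 2) (by fun_prop) hφ]
    simp
  have hBψ : DifferentiableAt ℝ (fun y => B (ψ y)) x := hB.comp x hψ1
  unfold electrostaticPressure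
  rw [pd_add i (by fun_prop) (by fun_prop),
    pd_mul i (by fun_prop) (by fun_prop), pd_mul i (by fun_prop) hBψ, hεφ, hsq,
    pd_comp i hB hψ1, pd_sum_sq i hdψ]
  ring

theorem sum_pd_Tele
    (hε : DifferentiableAt ℝ ε (φ x)) (hB : DifferentiableAt ℝ B (ψ x))
    (hφ : DifferentiableAt ℝ φ x) (hψ : ContDiffAt ℝ 2 ψ x) :
    ∑ j, pd (Tele ε B φ ψ i j) j x
      = pd ψ i x * ∑ j, pd (fun y => ε (φ y) * pd ψ j y) j x
        + ε (φ x) * ∑ j, pd ψ j x * pd (pd ψ i) j x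
        - pd (electrostaticPressure ε B φ ψ) i x := by
  have hdψ (l : Fin 3) := hψ.differentiableAt_pd l
  have hψ1 := hψ.differentiableAt two_ne_zero
  have hεφ : DifferentiableAt ℝ (fun y => ε (φ y)) x := hε.comp x hφ
  have hP : DifferentiableAt ℝ (electrostaticPressure ε B φ ψ) x := by
    unfold electrostaticPressure
    fun_prop
  have hT (j : Fin 3) : pd (Tele ε B φ ψ i j) j x
      = pd (fun y => ε (φ y) * pd ψ i y * pd ψ j y) j x
        - pd (fun y => electrostaticPressure ε B φ ψ y * if i = j then 1 else 0) j x :=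
    pd_sub j ((hεφ.fun_mul (hdψ i)).fun_mul (hdψ j)) (hP.mul_const _)
  rw [Finset.sum_congr rfl fun j _ => hT j, Finset.sum_sub_distrib,
    sum_pd_mul_mul i hεφ hdψ, sum_pd_mul_ite]

end ElectrostaticStress

theorem div_electrostatic_stress_general (Ω : Set (EuclideanSpace ℝ (Fin 3))) (hΩ : IsOpen Ω)
    (ε B : ℝ → ℝ) (hε : ContDiff ℝ 1 ε) (hB : ContDiff ℝ 1 B)
    (ρ : EuclideanSpace ℝ (Fin 3) → ℝ)
    (φ ψ : EuclideanSpace ℝ (Fin 3) → ℝ)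
    (hφ : ContDiffOn ℝ 2 φ Ω) (hψ : ContDiffOn ℝ 2 ψ Ω)
    (hPB : ∀ x ∈ Ω,
      (∑ j, pd (fun y => ε (φ y) * pd ψ j y) j x) - (φ x - 1) ^ 2 * deriv B (ψ x)
        = -ρ x) :
    ∀ x ∈ Ω, ∀ i : Fin 3,
      ∑ j, pd (Tele ε B φ ψ i j) j x
        = -ρ x * pd ψ i x
          - (deriv ε (φ x) / 2 * ∑ l, (pd ψ l x) ^ 2 + 2 * (φ x - 1) * B (ψ x))
              * pd φ i x := by
  intro x hx i
  have hφx := (hφ.contDiffAt (hΩ.mem_nhds hx)).differentiableAt two_ne_zero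
  have hψx : ContDiffAt ℝ 2 ψ x := hψ.contDiffAt (hΩ.mem_nhds hx)
  have hεx := hε.differentiable one_ne_zero (φ x)
  have hBx := hB.differentiable one_ne_zero (ψ x)
  rw [sum_pd_Tele i hεx hBx hφx hψx, pd_electrostaticPressure i hεx hBx hφx hψx]
  simp_rw [hψx.pd_pd_comm i]
  linear_combination pd ψ i x * hPB x hx

/-- if `div(ε(φ)∇ψ) − (φ−1)² B'(ψ) = −ρ` on `Ω`, then
`div T_ele = −ρ ∇ψ − [ (ε'(φ)/2)|∇ψ|² + 2(φ−1) B(ψ) ] ∇φ` pointwise on `Ω`;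
equivalently `f_ele = div T_ele + ρ ∇ψ`. -/
theorem div_electrostatic_stress (Ω : Set (EuclideanSpace ℝ (Fin 3))) (hΩ : IsOpen Ω)
    (ε B : ℝ → ℝ) (hε : ContDiff ℝ 1 ε) (hB : ContDiff ℝ 1 B)
    (ρ : EuclideanSpace ℝ (Fin 3) → ℝ) (hρ : ContinuousOn ρ Ω)
    (φ ψ : EuclideanSpace ℝ (Fin 3) → ℝ)
    (hφ : ContDiffOn ℝ 2 φ Ω) (hψ : ContDiffOn ℝ 2 ψ Ω)
    (hPB : ∀ x ∈ Ω,
      (∑ j, pd (fun y => ε (φ y) * pd ψ j y) j x) - (φ x - 1) ^ 2 * deriv B (ψ x)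
        = -ρ x) :
    ∀ x ∈ Ω, ∀ i : Fin 3,
      ∑ j, pd (Tele ε B φ ψ i j) j x
        = -ρ x * pd ψ i x
          - (deriv ε (φ x) / 2 * ∑ l, (pd ψ l x) ^ 2 + 2 * (φ x - 1) * B (ψ x))
              * pd φ i x :=
  div_electrostatic_stress_general Ω hΩ ε B hε hB ρ φ ψ hφ hψ hPB
end
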